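/- arXiv:2303.11118 — 8 statements merged into one kernel-verified Lean document; each statement's English description precedes it below -/
import Mathlib

section
/- The one-sided limits of the exchange ratio -Δy/Δx as Δx → 0 are (1/(1-τ))·(α/(1-α))·(y/x) from below (ask) and (1-τ)·(α/(1-α))·(y/x) from above (bid). In particular the bid price is strictly less than the ask price whenever τ ∈ (0,1). -/
/-- Output of a sale of `z > 0` units of X. -/
noncomputable def fplus (τ β x y z : ℝ) : ℝ := y * (1 - (x / (x + (1 - τ) * z)) ^ β)

/-- (Negative of the) amount of Y paid when buying `-z > 0` units of X (so `fminus < 0` for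
`z < 0`; the exchange ratio is `fminus z / z`). -/
noncomputable def fminus (τ β x y z : ℝ) : ℝ := y / (1 - τ) * (1 - (x / (x + z)) ^ β)

/-!
Both trade functions have the form `z ↦ K * (1 - (x / (x + c z)) ^ β)`, which vanishes at `z = 0`,
so the limiting exchange ratio is its derivative at `0`, namely `K β c / x`. A purchase pays the fee
on the Y side (`K = y / (1 - τ)`, `c = 1`), a sale on the X side (`K = y`, `c = 1 - τ`); the
resulting prices differ by the factor `(1 - τ)²`, which is `< 1` for `τ ∈ (0, 1)`.
-/

open Filter Topology

theorem hasDerivAt_div_add_mul_rpow (β c : ℝ) {x : ℝ} (hx : x ≠ 0) :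
    HasDerivAt (fun z : ℝ => (x / (x + c * z)) ^ β) (-(β * c / x)) 0 := by
  have hden : HasDerivAt (fun z : ℝ => x + c * z) c 0 := by
    simpa using ((hasDerivAt_id (0 : ℝ)).const_mul c).const_add x
  have hbase : HasDerivAt (fun z : ℝ => x / (x + c * z)) (-(c / x)) 0 := by
    refine ((hasDerivAt_const (0 : ℝ) x).div hden (by simpa using hx)).congr_deriv ?_
    simp only [mul_zero, add_zero, zero_mul, zero_sub]
    field_simp
  convert hbase.rpow_const (p := β) (Or.inl (by simp [div_self hx])) using 1
  simp only [mul_zero, add_zero, div_self hx, Real.one_rpow, mul_one]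
  ring

theorem tendsto_one_sub_div_add_mul_rpow_div (β c : ℝ) {x : ℝ} (hx : x ≠ 0) :
    Tendsto (fun z : ℝ => (1 - (x / (x + c * z)) ^ β) / z) (𝓝[≠] 0) (𝓝 (β * c / x)) := by
  have h := hasDerivAt_iff_tendsto_slope_zero.mp
    ((hasDerivAt_div_add_mul_rpow β c hx).const_sub 1)
  simp only [neg_neg, zero_add, mul_zero, add_zero, div_self hx, Real.one_rpow, sub_self,
    sub_zero, smul_eq_mul] at h
  simpa only [div_eq_inv_mul] using h

theorem tendsto_fminus_div_nhdsLT (τ β y : ℝ) {x : ℝ} (hx : x ≠ 0) :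
    Tendsto (fun z => fminus τ β x y z / z) (𝓝[<] 0) (𝓝 (1 / (1 - τ) * β * (y / x))) := by
  have h := ((tendsto_one_sub_div_add_mul_rpow_div β 1 hx).mono_left
    (nhdsLT_le_nhdsNE 0)).const_mul (y / (1 - τ))
  rw [show 1 / (1 - τ) * β * (y / x) = y / (1 - τ) * (β * 1 / x) by ring]
  simpa only [fminus, one_mul, mul_div_assoc] using h

theorem tendsto_fplus_div_nhdsGT (τ β y : ℝ) {x : ℝ} (hx : x ≠ 0) :
    Tendsto (fun z => fplus τ β x y z / z) (𝓝[>] 0) (𝓝 ((1 - τ) * β * (y / x))) := by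
  have h := ((tendsto_one_sub_div_add_mul_rpow_div β (1 - τ) hx).mono_left
    (nhdsGT_le_nhdsNE 0)).const_mul y
  rw [show (1 - τ) * β * (y / x) = y * (β * (1 - τ) / x) by ring]
  simpa only [fplus, mul_div_assoc] using h

theorem one_sub_mul_lt_one_div_one_sub_mul {τ p : ℝ} (hτ : τ ∈ Set.Ioo (0 : ℝ) 1) (hp : 0 < p) :
    (1 - τ) * p < 1 / (1 - τ) * p := by
  obtain ⟨hτ0, hτ1⟩ := hτ
  have hlt : 1 - τ < 1 / (1 - τ) := by
    rw [lt_div_iff₀ (by linarith)]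
    nlinarith
  exact mul_lt_mul_of_pos_right hlt hp

/-- The one-sided limits of the exchange ratio `-Δy/Δx` as `Δx → 0` are
`(1/(1-τ))·(α/(1-α))·(y/x)` from below (ask) and `(1-τ)·(α/(1-α))·(y/x)` from above (bid);
moreover the bid price is strictly less than the ask price. -/
theorem stmt_4 (α τ β x y : ℝ)
    (hα : α ∈ Set.Ioo (0 : ℝ) 1) (hτ : τ ∈ Set.Ioo (0 : ℝ) 1)
    (hβ : β = α / (1 - α)) (hx : 0 < x) (hy : 0 < y) :
    Filter.Tendsto (fun z => fminus τ β x y z / z) (nhdsWithin 0 (Set.Iio 0))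
      (nhds (1 / (1 - τ) * (α / (1 - α)) * (y / x))) ∧
    Filter.Tendsto (fun z => fplus τ β x y z / z) (nhdsWithin 0 (Set.Ioi 0))
      (nhds ((1 - τ) * (α / (1 - α)) * (y / x))) ∧
    (1 - τ) * (α / (1 - α)) * (y / x) < 1 / (1 - τ) * (α / (1 - α)) * (y / x) := by
  subst hβ
  have hpos : 0 < α / (1 - α) * (y / x) :=
    mul_pos (div_pos hα.1 (sub_pos.mpr hα.2)) (div_pos hy hx)
  refine ⟨tendsto_fminus_div_nhdsLT τ _ y hx.ne', tendsto_fplus_div_nhdsGT τ _ y hx.ne', ?_⟩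
  simpa only [mul_assoc] using one_sub_mul_lt_one_div_one_sub_mul hτ hpos
end

section
/- In a G3M with fee τ ∈ (0,1) and weight α = 1/2, if a trader splits a sale Δx > 0 into Δx₁ > Δx (a sale) followed by Δx₂ = Δx - Δx₁ < 0 (a buy-back), her total proceeds -Δy₁ - Δy₂ are strictly less than the block-trade proceeds -Δy = (1-τ)yΔx/(x + (1-τ)Δx); precisely, the shortfall equals -τ x y Δx₂ (x + (1-τ)(x+Δx)) / [(1-τ)(x+Δx)(x+(1-τ)Δx₁)(x+(1-τ)Δx)] > 0. -/
/-- In a G3M with fee `τ ∈ (0,1)` and weight `α = 1/2`, splitting a sale `Δx > 0` into a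
larger sale `Δx₁ > Δx` followed by a buy-back `Δx₂ = Δx - Δx₁ < 0` yields strictly less
total proceeds than the block trade, and the shortfall is given explicitly. -/
theorem stmt_5 (τ x y Δx Δx₁ Δx₂ : ℝ)
    (hτ : τ ∈ Set.Ioo (0 : ℝ) 1) (hx : 0 < x) (hy : 0 < y)
    (hΔx : 0 < Δx) (h1 : Δx < Δx₁) (h2 : Δx₂ = Δx - Δx₁)
    (Δy Δy₁ Δy₂ : ℝ)
    (hΔy : Δy = -((1 - τ) * y * Δx / (x + (1 - τ) * Δx)))
    (hΔy₁ : Δy₁ = -((1 - τ) * y * Δx₁ / (x + (1 - τ) * Δx₁)))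
    (hΔy₂ : Δy₂ = -(1 / (1 - τ) * ((y + Δy₁) * Δx₂) / (x + Δx₁ + Δx₂))) :
    (-Δy₁ - Δy₂) - (-Δy) =
      τ * x * y * Δx₂ * (x + (1 - τ) * (x + Δx)) /
        ((1 - τ) * (x + Δx) * (x + (1 - τ) * Δx₁) * (x + (1 - τ) * Δx)) ∧
    -Δy₁ - Δy₂ < -Δy := by
  obtain ⟨hτ0, hτ1⟩ := hτ
  have h1τ : (0:ℝ) < 1 - τ := by linarith
  have hxx : (0:ℝ) < x + Δx := by linarith
  have hd1 : (0:ℝ) < x + (1 - τ) * Δx := by positivity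
  have hd2 : (0:ℝ) < x + (1 - τ) * Δx₁ := by nlinarith
  have hsum : x + Δx₁ + Δx₂ = x + Δx := by rw [h2]; ring
  have hΔx₂ : Δx₂ < 0 := by rw [h2]; linarith
  have key : (-Δy₁ - Δy₂) - (-Δy) =
      τ * x * y * Δx₂ * (x + (1 - τ) * (x + Δx)) /
        ((1 - τ) * (x + Δx) * (x + (1 - τ) * Δx₁) * (x + (1 - τ) * Δx)) := by
    rw [hΔy, hΔy₁, hΔy₂, hΔy₁, hsum]
    have : Δx₂ = Δx - Δx₁ := h2
    rw [this]
    field_simp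
    ring
  refine ⟨key, ?_⟩
  have hpos : 0 < -(τ * x * y * Δx₂ * (x + (1 - τ) * (x + Δx)) /
      ((1 - τ) * (x + Δx) * (x + (1 - τ) * Δx₁) * (x + (1 - τ) * Δx))) := by
    have h5 : (0:ℝ) < x + (1 - τ) * (x + Δx) := by nlinarith
    rw [neg_pos]
    apply div_neg_of_neg_of_pos
    · nlinarith [mul_pos (mul_pos (mul_pos hτ0 hx) hy) h5]
    · positivity
  linarith [key]
end

section
/- (Absence of price manipulation, case Δx₁ > 0, Δx₂ < 0, Δx₁ + Δx₂ > 0) In a G3M with fee, executing a sale of Δx₁ followed by a buy of -Δx₂ yields strictly less total proceeds than the single block sale of Δx = Δx₁ + Δx₂: -Δy₁ - Δy₂ < -Δy, where Δy₁ = -f₊(x,y,Δx₁), Δy₂ = -f₋(x+Δx₁, y+Δy₁, Δx₂), Δy = -f₊(x,y,Δx). -/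
/-- Absence of price manipulation, case `Δx₁ > 0`, `Δx₂ < 0`, `Δx₁ + Δx₂ > 0`:
a sale of `Δx₁` followed by a buy of `-Δx₂` yields strictly less total proceeds than the
single block sale of `Δx = Δx₁ + Δx₂`. -/
theorem stmt_6 (α τ β x y Δx₁ Δx₂ : ℝ)
    (hα : α ∈ Set.Ioo (0 : ℝ) 1) (hτ : τ ∈ Set.Ioo (0 : ℝ) 1)
    (hβ : β = α / (1 - α)) (hx : 0 < x) (hy : 0 < y)
    (h1 : 0 < Δx₁) (h2 : Δx₂ < 0) (h12 : 0 < Δx₁ + Δx₂)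
    (Δy₁ Δy₂ Δy : ℝ)
    (hΔy₁ : Δy₁ = -fplus τ β x y Δx₁)
    (hΔy₂ : Δy₂ = -fminus τ β (x + Δx₁) (y + Δy₁) Δx₂)
    (hΔy : Δy = -fplus τ β x y (Δx₁ + Δx₂))
    (hx1 : 0 < x + Δx₁) (hy1 : 0 < y + Δy₁)
    (hx2 : 0 < x + Δx₁ + Δx₂) (hy2 : 0 < y + Δy₁ + Δy₂) :
    -Δy₁ - Δy₂ < -Δy := by
  obtain ⟨hα0, hα1⟩ := hα
  obtain ⟨hτ0, hτ1⟩ := hτ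
  have hu : 0 < 1 - τ := by linarith
  have hu' : (1 : ℝ) - τ ≠ 0 := ne_of_gt hu
  have hβ0 : 0 < β := by rw [hβ]; exact div_pos hα0 (by linarith)
  have ha : 0 < x + (1 - τ) * Δx₁ := by nlinarith
  have hc : 0 < x + (1 - τ) * (Δx₁ + Δx₂) := by nlinarith
  set A : ℝ := (x / (x + (1 - τ) * Δx₁)) ^ β with hAdef
  set C : ℝ := (x / (x + (1 - τ) * (Δx₁ + Δx₂))) ^ β with hCdef
  set s : ℝ := ((x + Δx₁) / (x + Δx₁ + Δx₂)) ^ β with hsdef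
  have hA : 0 < A := Real.rpow_pos_of_pos (div_pos hx ha) β
  set t : ℝ := ((x + (1 - τ) * Δx₁) / (x + (1 - τ) * (Δx₁ + Δx₂))) ^ β with htdef
  have hCA : C = A * t := by
    rw [hCdef, hAdef, htdef, ← Real.mul_rpow (by positivity) (by positivity)]
    congr 1
    field_simp
  have ht1 : 1 < t := by
    rw [htdef]
    rw [Real.one_lt_rpow_iff_of_pos (by positivity)]
    left
    constructor
    · rw [lt_div_iff₀ hc]; nlinarith
    · exact hβ0
  have hts : t < s := by
    rw [htdef, hsdef]
    apply Real.rpow_lt_rpow (by positivity) _ hβ0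
    rw [div_lt_div_iff₀ hc hx2]
    nlinarith [mul_pos (mul_pos hτ0 hx) (neg_pos.2 h2)]
  have key : (1 - τ) * C + τ * A < A * s := by
    rw [hCA]
    nlinarith [mul_pos hA (sub_pos.2 hts), mul_pos hA (mul_pos hτ0 (sub_pos.2 ht1))]
  -- y + Δy₁ = y * A
  have hyA : y + Δy₁ = y * A := by
    rw [hΔy₁]; unfold fplus; rw [← hAdef]; ring
  have final : y * (1 - A) + y * A / (1 - τ) * (1 - s) < y * (1 - C) := by
    rw [div_mul_eq_mul_div, add_comm, ← lt_sub_iff_add_lt, div_lt_iff₀ hu]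
    nlinarith [mul_lt_mul_of_pos_left key hy]
  rw [hΔy₁] at hΔy₂
  rw [hΔy₁, hΔy₂, hΔy]
  unfold fplus fminus
  rw [show y + -(y * (1 - (x / (x + (1 - τ) * Δx₁)) ^ β)) = y * A from by rw [hAdef]; ring]
  rw [← hAdef, ← hsdef, ← hCdef]
  linarith [final]
end

section
/- (Absence of price manipulation, case Δx₁ < 0, Δx₂ > 0, Δx₁ + Δx₂ > 0) Executing a buy of -Δx₁ followed by a sale of Δx₂ yields strictly less total proceeds than the single block sale of Δx = Δx₁ + Δx₂: -Δy₁ - Δy₂ < -Δy, where Δy₁ = -f₋(x,y,Δx₁), Δy₂ = -f₊(x+Δx₁, y+Δy₁, Δx₂), Δy = -f₊(x,y,Δx). -/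
open Real Set

lemma fminus_add_fplus_eq (τ β x y z₁ z₂ : ℝ) :
    fminus τ β x y z₁ + fplus τ β (x + z₁) (y - fminus τ β x y z₁) z₂ =
      y * (1 - (1 + ((x / (x + z₁)) ^ β - 1) / (1 - τ)) *
        ((x + z₁) / (x + z₁ + (1 - τ) * z₂)) ^ β) := by
  unfold fminus fplus
  ring

lemma rpow_div_lt_rpow_div_mul_rpow_div {τ β x z₁ z₂ : ℝ} (hτ : 0 < τ) (hβ : 0 < β)
    (hx : 0 < x) (hz₁ : z₁ < 0) (hxz₁ : 0 < x + z₁) (hD : 0 < x + z₁ + (1 - τ) * z₂) :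
    (x / (x + (1 - τ) * (z₁ + z₂))) ^ β <
      (x / (x + z₁)) ^ β * ((x + z₁) / (x + z₁ + (1 - τ) * z₂)) ^ β := by
  have hDD : x + z₁ + (1 - τ) * z₂ < x + (1 - τ) * (z₁ + z₂) := by nlinarith
  rw [← mul_rpow (by positivity) (by positivity), div_mul_div_cancel₀ hxz₁.ne']
  exact rpow_lt_rpow (div_nonneg hx.le (by linarith)) (div_lt_div_of_pos_left hx hD hDD) hβ

theorem fminus_add_fplus_lt_fplus {τ β x y z₁ z₂ : ℝ} (hτ : τ ∈ Ioo 0 1) (hβ : 0 < β)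
    (hx : 0 < x) (hy : 0 < y) (hz₁ : z₁ < 0) (hz₂ : 0 ≤ z₂) (hxz₁ : 0 < x + z₁) :
    fminus τ β x y z₁ + fplus τ β (x + z₁) (y - fminus τ β x y z₁) z₂ <
      fplus τ β x y (z₁ + z₂) := by
  obtain ⟨hτ₀, hτ₁⟩ := hτ
  set A := (x / (x + z₁)) ^ β
  set B := ((x + z₁) / (x + z₁ + (1 - τ) * z₂)) ^ β
  have hA : 1 < A := one_lt_rpow ((one_lt_div hxz₁).2 (by linarith)) hβ
  have hB : 0 < B := rpow_pos_of_pos (div_pos hxz₁ (by nlinarith)) β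
  have hfee : A < 1 + (A - 1) / (1 - τ) := by
    have : A - 1 < (A - 1) / (1 - τ) := (lt_div_iff₀ (by linarith)).2 (by nlinarith)
    linarith
  rw [fminus_add_fplus_eq, fplus]
  gcongr
  calc (x / (x + (1 - τ) * (z₁ + z₂))) ^ β
      < A * B := rpow_div_lt_rpow_div_mul_rpow_div hτ₀ hβ hx hz₁ hxz₁ (by nlinarith)
    _ < (1 + (A - 1) / (1 - τ)) * B := by gcongr

theorem stmt_7_general (α τ β x y Δx₁ Δx₂ : ℝ)
    (hα : α ∈ Set.Ioo (0 : ℝ) 1) (hτ : τ ∈ Set.Ioo (0 : ℝ) 1)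
    (hβ : β = α / (1 - α)) (hx : 0 < x) (hy : 0 < y)
    (h1 : Δx₁ < 0) (h2 : 0 < Δx₂)
    (Δy₁ Δy₂ Δy : ℝ)
    (hΔy₁ : Δy₁ = -fminus τ β x y Δx₁)
    (hΔy₂ : Δy₂ = -fplus τ β (x + Δx₁) (y + Δy₁) Δx₂)
    (hΔy : Δy = -fplus τ β x y (Δx₁ + Δx₂))
    (hx1 : 0 < x + Δx₁) :
    -Δy₁ - Δy₂ < -Δy := by
  have hβ₀ : 0 < β := hβ ▸ div_pos hα.1 (sub_pos.2 hα.2)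
  subst hΔy₁ hΔy₂ hΔy
  simpa [← sub_eq_add_neg] using
    fminus_add_fplus_lt_fplus hτ hβ₀ hx hy h1 h2.le hx1

/-- Absence of price manipulation, case `Δx₁ < 0`, `Δx₂ > 0`, `Δx₁ + Δx₂ > 0`:
a buy of `-Δx₁` followed by a sale of `Δx₂` yields strictly less total proceeds than the
single block sale of `Δx = Δx₁ + Δx₂`. -/
theorem stmt_7 (α τ β x y Δx₁ Δx₂ : ℝ)
    (hα : α ∈ Set.Ioo (0 : ℝ) 1) (hτ : τ ∈ Set.Ioo (0 : ℝ) 1)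
    (hβ : β = α / (1 - α)) (hx : 0 < x) (hy : 0 < y)
    (h1 : Δx₁ < 0) (h2 : 0 < Δx₂) (h12 : 0 < Δx₁ + Δx₂)
    (Δy₁ Δy₂ Δy : ℝ)
    (hΔy₁ : Δy₁ = -fminus τ β x y Δx₁)
    (hΔy₂ : Δy₂ = -fplus τ β (x + Δx₁) (y + Δy₁) Δx₂)
    (hΔy : Δy = -fplus τ β x y (Δx₁ + Δx₂))
    (hx1 : 0 < x + Δx₁) (hy1 : 0 < y + Δy₁)
    (hx2 : 0 < x + Δx₁ + Δx₂) (hy2 : 0 < y + Δy₁ + Δy₂) :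
    -Δy₁ - Δy₂ < -Δy :=
  stmt_7_general α τ β x y Δx₁ Δx₂ hα hτ hβ hx hy h1 h2 Δy₁ Δy₂ Δy hΔy₁ hΔy₂ hΔy hx1
end

section
/- If s* < b = (1-τ)βy/x, the arbitrageur's profit -Δy - s*Δx with -Δy = f₊(x,y,Δx) is maximized over Δx > 0 at Δx* = (x/(1-τ))((b/s*)^{1-α} - 1), characterized by the first-order condition ∂f₊/∂z(x,y,Δx*) = s*. -/
/-!
The profit `f₊(z) - s*·z` is concave: the marginal price
`∂f₊/∂z = (1-τ)βy·x^β / (x + (1-τ)z)^(β+1)` decreases in `z`. Hence the profit is maximised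
where the marginal price equals `s*`. Solving gives `x + (1-τ)Δx* = x·(b/s*)^(1-α)`, and since
`(1-α)(β+1) = 1` the marginal price there is `b / (b/s*) = s*`; `Δx* > 0` because `b > s*`.
-/

open Set

lemma AntitoneOn.isMaxOn_sub_mul_of_hasDerivAt {f f' : ℝ → ℝ} {a b s : ℝ}
    (hf : ∀ z ∈ Ioi a, HasDerivAt f (f' z) z) (hf' : AntitoneOn f' (Ioi a)) (hb : b ∈ Ioi a)
    (hfb : f' b = s) : IsMaxOn (fun z => f z - s * z) (Ioi a) b := by
  have hg : ∀ z ∈ Ioi a, HasDerivAt (fun z => f z - s * z) (f' z - s) z := fun z hz => by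
    have := (hf z hz).sub ((hasDerivAt_id' z).const_mul s)
    rwa [mul_one] at this
  have hdiff : DifferentiableOn ℝ (fun z => f z - s * z) (Ioi a) := fun z hz =>
    (hg z hz).differentiableAt.differentiableWithinAt
  apply isMaxOn_Ioi_of_deriv (hg b hb).continuousAt (hdiff.mono Ioo_subset_Ioi_self)
    (hdiff.mono (Ioi_subset_Ioi hb.le))
  · intro z hz
    rw [(hg z hz.1).deriv, sub_nonneg, ← hfb]
    exact hf' hz.1 hb hz.2.le
  · intro z hz
    have hza : z ∈ Ioi a := lt_trans (mem_Ioi.mp hb) hz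
    rw [(hg z hza).deriv, sub_nonpos, ← hfb]
    exact hf' hb hza (le_of_lt hz)

noncomputable def fplusDeriv (τ β x y z : ℝ) : ℝ :=
  y * β * (1 - τ) * x ^ β / (x + (1 - τ) * z) ^ (β + 1)

lemma hasDerivAt_fplus {τ β x y z : ℝ} (hx : 0 < x) (hz : 0 < x + (1 - τ) * z) :
    HasDerivAt (fplus τ β x y) (fplusDeriv τ β x y z) z := by
  have hu : HasDerivAt (fun z : ℝ => x + (1 - τ) * z) (1 - τ) z := by
    simpa using ((hasDerivAt_id z).const_mul (1 - τ)).const_add x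
  have hquot : HasDerivAt (fun z : ℝ => x / (x + (1 - τ) * z))
      ((0 * (x + (1 - τ) * z) - x * (1 - τ)) / (x + (1 - τ) * z) ^ 2) z :=
    (hasDerivAt_const z x).div hu hz.ne'
  refine (((hquot.rpow_const (p := β) (Or.inl (div_pos hx hz).ne')).const_sub 1).const_mul
    y).congr_deriv ?_
  set u := x + (1 - τ) * z
  have hxβ : x ^ β = x ^ (β - 1) * x := by
    rw [← Real.rpow_add_one hx.ne']; ring_nf
  have huβ : u ^ (β + 1) = u ^ (β - 1) * u ^ 2 := by
    rw [← Real.rpow_natCast u 2, ← Real.rpow_add hz]; norm_num; ring_nf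
  have hu_pos : 0 < u ^ (β - 1) := Real.rpow_pos_of_pos hz _
  rw [fplusDeriv, Real.div_rpow hx.le hz.le, hxβ, huβ]
  field_simp
  ring

lemma fplusDeriv_antitoneOn {τ β x y : ℝ} (hτ : τ ≤ 1) (hβ : 0 ≤ β) (hx : 0 < x) (hy : 0 ≤ y) :
    AntitoneOn (fplusDeriv τ β x y) (Ici 0) := by
  intro z hz w hw hzw
  have hc : 0 ≤ 1 - τ := sub_nonneg.mpr hτ
  have hxz : 0 < x + (1 - τ) * z := by have := mul_nonneg hc hz; positivity
  apply div_le_div_of_nonneg_left (by positivity) (by positivity)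
  exact Real.rpow_le_rpow hxz.le (by gcongr) (by positivity)

noncomputable def optimalSale (α τ β x y s : ℝ) : ℝ :=
  x / (1 - τ) * ((((1 - τ) * β * y / x) / s) ^ (1 - α) - 1)

lemma optimalSale_pos {α τ β x y s : ℝ} (hα : α < 1) (hτ : τ < 1) (hx : 0 < x) (hs : 0 < s)
    (hsb : s < (1 - τ) * β * y / x) : 0 < optimalSale α τ β x y s := by
  have hc : 0 < 1 - τ := sub_pos.mpr hτ
  have hr : 1 < (1 - τ) * β * y / x / s := (one_lt_div hs).mpr hsb
  have : 1 < ((1 - τ) * β * y / x / s) ^ (1 - α) := Real.one_lt_rpow hr (sub_pos.mpr hα)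
  exact mul_pos (by positivity) (sub_pos.mpr this)

lemma add_mul_optimalSale {α τ β x y s : ℝ} (hτ : τ < 1) :
    x + (1 - τ) * optimalSale α τ β x y s = x * (((1 - τ) * β * y / x) / s) ^ (1 - α) := by
  have hc : 1 - τ ≠ 0 := (sub_pos.mpr hτ).ne'
  rw [optimalSale]; field_simp; ring

lemma fplusDeriv_optimalSale {α τ β x y s : ℝ} (hα : α < 1) (hβ : β = α / (1 - α)) (hτ : τ < 1)
    (hx : 0 < x) (hs : 0 < s) (hsb : s < (1 - τ) * β * y / x) :
    fplusDeriv τ β x y (optimalSale α τ β x y s) = s := by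
  set r := (1 - τ) * β * y / x / s with hr
  have hr_pos : 0 < r := lt_trans one_pos ((one_lt_div hs).mpr hsb)
  have hexp : (1 - α) * (β + 1) = 1 := by
    rw [hβ]; field_simp [(sub_pos.mpr hα).ne']; ring
  have hbase : (x + (1 - τ) * optimalSale α τ β x y s) ^ (β + 1) = x ^ (β + 1) * r := by
    rw [add_mul_optimalSale hτ, Real.mul_rpow hx.le (by positivity), ← Real.rpow_mul hr_pos.le,
      hexp, Real.rpow_one]
  rw [fplusDeriv, hbase, Real.rpow_add_one hx.ne', hr]
  have hnum : y * β * (1 - τ) ≠ 0 := by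
    have : 0 < (1 - τ) * β * y / x := hs.trans hsb
    intro h
    simp [show (1 - τ) * β * y = y * β * (1 - τ) by ring, h] at this
  have : (0:ℝ) < x ^ β := Real.rpow_pos_of_pos hx _
  field_simp
  exact div_self hnum

/-- If `s* < b = (1-τ)βy/x`, the arbitrageur's profit `f₊(x,y,Δx) - s*·Δx` is maximized over
`Δx > 0` at `Δx* = (x/(1-τ))((b/s*)^(1-α) - 1)`, characterized by the first-order condition
`∂f₊/∂z(x,y,Δx*) = s*`. -/
theorem stmt_8 (α τ β x y sstar : ℝ)
    (hα : α ∈ Set.Ioo (0 : ℝ) 1) (hτ : τ ∈ Set.Ioo (0 : ℝ) 1)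
    (hβ : β = α / (1 - α)) (hx : 0 < x) (hy : 0 < y)
    (hs : 0 < sstar) (hsb : sstar < (1 - τ) * β * y / x)
    (Δxstar : ℝ)
    (hΔxstar : Δxstar = x / (1 - τ) * ((((1 - τ) * β * y / x) / sstar) ^ (1 - α) - 1)) :
    0 < Δxstar ∧
    HasDerivAt (fun z => fplus τ β x y z) sstar Δxstar ∧
    (∀ z, 0 < z → fplus τ β x y z - sstar * z ≤ fplus τ β x y Δxstar - sstar * Δxstar) := by
  obtain rfl : Δxstar = optimalSale α τ β x y sstar := hΔxstar
  have hpos := optimalSale_pos hα.2 hτ.2 hx hs hsb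
  have hfoc := fplusDeriv_optimalSale hα.2 hβ hτ.2 hx hs hsb
  have hderiv : ∀ z ∈ Ioi (0 : ℝ), HasDerivAt (fplus τ β x y) (fplusDeriv τ β x y z) z :=
    fun z hz => hasDerivAt_fplus hx (by have := mul_pos (sub_pos.mpr hτ.2) hz; positivity)
  have hβ0 : 0 ≤ β := hβ ▸ div_nonneg hα.1.le (sub_pos.mpr hα.2).le
  have hmax := (fplusDeriv_antitoneOn hτ.2.le hβ0 hx hy.le).mono Ioi_subset_Ici_self
    |>.isMaxOn_sub_mul_of_hasDerivAt hderiv hpos hfoc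
  exact ⟨hpos, (hderiv _ hpos).congr_deriv hfoc, fun z hz => hmax hz⟩
end

section
/- After the optimal arbitrage sale Δx = (x/(1-τ))((b/s*)^{1-α} - 1) (with b = (1-τ)βy/x and s* < b), the updated reserves (x + Δx, y + Δy) with Δy = -f₊(x,y,Δx) satisfy the no-arbitrage condition: (1-τ)β(y+Δy)/(x+Δx) ≤ s* ≤ (1/(1-τ))β(y+Δy)/(x+Δx), and indeed both inequalities are strict. -/
/-- After the optimal arbitrage sale `Δx = (x/(1-τ))((b/s*)^(1-α) - 1)` (with
`b = (1-τ)βy/x` and `s* < b`), the updated reserves satisfy the no-arbitrage condition with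
strict inequalities: `(1-τ)β(y+Δy)/(x+Δx) < s* < (1/(1-τ))β(y+Δy)/(x+Δx)`. -/
theorem stmt_9 (α τ β x y sstar Δx Δy : ℝ)
    (hα : α ∈ Set.Ioo (0 : ℝ) 1) (hτ : τ ∈ Set.Ioo (0 : ℝ) 1)
    (hβ : β = α / (1 - α)) (hx : 0 < x) (hy : 0 < y)
    (hs : 0 < sstar) (hsb : sstar < (1 - τ) * β * y / x)
    (hΔx : Δx = x / (1 - τ) * ((((1 - τ) * β * y / x) / sstar) ^ (1 - α) - 1))
    (hΔy : Δy = -fplus τ β x y Δx) :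
    (1 - τ) * β * (y + Δy) / (x + Δx) < sstar ∧
    sstar < 1 / (1 - τ) * (β * (y + Δy) / (x + Δx)) := by
  obtain ⟨hα0, hα1⟩ := hα
  obtain ⟨hτ0, hτ1⟩ := hτ
  have h1τ : (0:ℝ) < 1 - τ := by linarith
  have h1α : (0:ℝ) < 1 - α := by linarith
  have hβpos : 0 < β := by rw [hβ]; positivity
  set b : ℝ := (1 - τ) * β * y / x with hb
  have hbpos : 0 < b := by positivity
  have hbs : 1 < b / sstar := (one_lt_div hs).2 hsb
  have hbs0 : 0 < b / sstar := by linarith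
  set r : ℝ := (b / sstar) ^ (1 - α) with hr
  have hr1 : 1 < r := by
    rw [hr]
    exact (Real.one_lt_rpow_iff_of_pos hbs0).2 (Or.inl ⟨hbs, h1α⟩)
  have hrpos : 0 < r := by linarith
  have hrβpos : 0 < r ^ β := Real.rpow_pos_of_pos hrpos β
  have key1 : r * r ^ β = b / sstar := by
    have h2 : r ^ β = (b / sstar) ^ α := by
      rw [hr, ← Real.rpow_mul hbs0.le]
      congr 1
      rw [hβ]; field_simp
    rw [h2, hr, ← Real.rpow_add hbs0, show (1 - α) + α = 1 by ring, Real.rpow_one]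
  have hsxb : (1 - τ) * β * y = sstar * r * r ^ β * x := by
    have h3 := key1
    rw [hb] at h3
    field_simp at h3
    linarith [h3]
  have hxr : x + (1 - τ) * Δx = x * r := by
    rw [hΔx]
    field_simp
    ring
  have hyΔ : y + Δy = y / r ^ β := by
    rw [hΔy, fplus, hxr]
    have h4 : x / (x * r) = r⁻¹ := by field_simp
    rw [h4, Real.inv_rpow hrpos.le]
    field_simp
    ring
  have hxΔ : x + Δx = x * (r - τ) / (1 - τ) := by
    rw [hΔx]
    field_simp
    ring
  have hrτ : 0 < r - τ := by linarith
  have hQ : 0 < sstar * x * r ^ β := by positivity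
  constructor
  · rw [hyΔ, hxΔ]
    have e1 : (1 - τ) * β * (y / r ^ β) / (x * (r - τ) / (1 - τ)) =
        ((1 - τ) * ((1 - τ) * β * y)) / (r ^ β * (x * (r - τ))) := by
      field_simp
    rw [e1, div_lt_iff₀ (by positivity)]
    nlinarith [hsxb, mul_pos (mul_pos hQ hτ0) (sub_pos.2 hr1)]
  · rw [hyΔ, hxΔ]
    have e2 : 1 / (1 - τ) * (β * (y / r ^ β) / (x * (r - τ) / (1 - τ))) =
        (β * y) / (r ^ β * (x * (r - τ))) := by
      field_simp
    rw [e2, lt_div_iff₀ (by positivity)]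
    have h5 : sstar * (r ^ β * (x * (r - τ))) * (1 - τ) < β * y * (1 - τ) := by
      nlinarith [hsxb, mul_pos (mul_pos hQ hτ0) (show (0:ℝ) < 1 + r - τ by linarith)]
    exact lt_of_mul_lt_mul_right h5 h1τ.le
end

section
/- (Super-hedge theorem) Let S* be a positive continuous semimartingale, and let (X,Y) be the G3M reserve processes with fee τ ∈ (0,1) satisfying: X = Xᶜ + Σ_{s≤t}ΔX_s, Y = Yᶜ + Σ_{s≤t}ΔY_s with Xᶜ = X₀ + X↑ - X↓, Yᶜ = Y₀ + Y↑ - Y↓ continuous nondecreasing, dY↓ = B dX↑, dY↑ = A dX↓, X↑ (resp. X↓) increasing only on {B = S*} (resp. {A = S*}), B = (1-τ)βY/X, A = βY/((1-τ)X), the no-arbitrage bound B₋ ≤ S* ≤ A₋ holding at jump times, and each jump satisfying (X₋+(1-τH(ΔX))ΔX)^α(Y₋+(1-τH(ΔY))ΔY)^{1-α} ≥ X₋^α Y₋^{1-α}. Then the pool value V = Y + XS* satisfies V_T ≥ V₀ + ∫₀^T X_t dS*_t for all T ≥ 0, with equality when there are no jumps. -/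
open MeasureTheory

/-- The Heaviside function. -/
noncomputable def heaviside (z : ℝ) : ℝ := if 0 < z then 1 else 0

/-!
Summation by parts turns the left-endpoint sums of `X dS*` into `X S*` at the end points
minus right-endpoint sums of `S* dX`. As `S*` is continuous, the latter converge to `∫ S* dX`,
and on the continuous part `S* dX↑ = B dX↑ = dY↓` and `S* dX↓ = A dX↓ = dY↑`, because `X↑`
and `X↓` only move where `B = S*`, resp. `A = S*`. Hence `V_T - V_0 - ∫₀^T X dS*` is the sum of
`ΔY + S* ΔX` over the jumps. Each of these terms is nonnegative: by weighted AM-GM the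
trading-function inequality linearises to `α ΔX' Y₋ + (1 - α) ΔY' X₋ ≥ 0` for the
fee-adjusted trades `ΔX'`, `ΔY'`, and the no-arbitrage bounds `B₋ ≤ S* ≤ A₋` turn this into
`ΔY + S* ΔX ≥ 0`.
-/

open Finset

theorem Fin.sum_succ_sub_castSucc {M : Type*} [AddCommGroup M] {n : ℕ} (f : Fin (n + 1) → M) :
    ∑ i : Fin n, (f i.succ - f i.castSucc) = f (Fin.last n) - f 0 := by
  induction n with
  | zero => simp
  | succ n ih =>
    rw [Fin.sum_univ_castSucc]
    simp only [Fin.succ_castSucc]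
    rw [ih fun i => f i.castSucc, Fin.succ_last, Fin.castSucc_zero]
    abel

theorem Finset.sum_filter_le_eq_sum_filter_lt_add {α M : Type*} [LinearOrder α]
    [AddCommMonoid M] {J : Finset α} {s : α} (hs : s ∈ J) (f : α → M) :
    ∑ u ∈ J.filter (· ≤ s), f u = ∑ u ∈ J.filter (· < s), f u + f s := by
  rw [add_comm, ← sum_insert (s := J.filter (· < s)) (by simp)]
  congr 1
  ext u
  simp only [mem_filter, mem_insert]
  grind

section Jumps

variable (J : Finset ℝ)

noncomputable def jumpSum (Δ : ℝ → ℝ) (u : ℝ) : ℝ := ∑ s ∈ J.filter (· ≤ u), Δ s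

theorem jumpSum_sub_jumpSum {Δ : ℝ → ℝ} {a b : ℝ} (hab : a ≤ b) :
    jumpSum J Δ b - jumpSum J Δ a = ∑ s ∈ J.filter (· ∈ Set.Ioc a b), Δ s := by
  rw [jumpSum, jumpSum, sub_eq_iff_eq_add', ← sum_union]
  · congr 1
    ext s
    simp only [mem_filter, mem_union, Set.mem_Ioc]
    grind
  · exact disjoint_filter.2 fun s _ h h' => (not_le.2 h'.1) h

theorem jumpSum_mono {Δ : ℝ → ℝ} (hΔ : ∀ s ∈ J, 0 ≤ Δ s) : Monotone (jumpSum J Δ) :=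
  fun a b hab => sum_le_sum_of_subset_of_nonneg
    (fun s hs => by simp only [mem_filter] at hs ⊢; exact ⟨hs.1, hs.2.trans hab⟩)
    (fun s hs _ => hΔ s (mem_of_mem_filter s hs))

end Jumps

section RiemannSums

variable {n : ℕ}

def leftRiemannSum (f g : ℝ → ℝ) (t : Fin (n + 1) → ℝ) : ℝ :=
  ∑ i : Fin n, f (t i.castSucc) * (g (t i.succ) - g (t i.castSucc))

def rightRiemannSum (f g : ℝ → ℝ) (t : Fin (n + 1) → ℝ) : ℝ :=
  ∑ i : Fin n, f (t i.succ) * (g (t i.succ) - g (t i.castSucc))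

theorem leftRiemannSum_add_rightRiemannSum (f g : ℝ → ℝ) (t : Fin (n + 1) → ℝ) :
    leftRiemannSum f g t + rightRiemannSum g f t =
      f (t (Fin.last n)) * g (t (Fin.last n)) - f (t 0) * g (t 0) := by
  rw [leftRiemannSum, rightRiemannSum, ← sum_add_distrib,
    ← Fin.sum_succ_sub_castSucc fun j => f (t j) * g (t j)]
  exact sum_congr rfl fun i _ => by ring

def HasLeftRiemannIntegral (f g : ℝ → ℝ) (T I : ℝ) : Prop :=
  ∀ ε > 0, ∃ δ > 0, ∀ n : ℕ, ∀ t : Fin (n + 1) → ℝ,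
    Monotone t → t 0 = 0 → t (Fin.last n) = T →
    (∀ i : Fin n, t i.succ - t i.castSucc < δ) →
    |leftRiemannSum f g t - I| < ε

theorem exists_partition_mesh_lt {T δ : ℝ} (hT : 0 ≤ T) (hδ : 0 < δ) :
    ∃ n : ℕ, ∃ t : Fin (n + 1) → ℝ, Monotone t ∧ t 0 = 0 ∧ t (Fin.last n) = T ∧
      ∀ i : Fin n, t i.succ - t i.castSucc < δ := by
  obtain ⟨m, hm⟩ := exists_nat_gt (T / δ)
  have hm0 : (0 : ℝ) < m := (div_nonneg hT hδ.le).trans_lt hm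
  refine ⟨m, fun i => i * (T / m), fun i j hij => ?_, by simp, ?_, fun i => ?_⟩
  · exact mul_le_mul_of_nonneg_right (Nat.cast_le.2 hij) (by positivity)
  · simp only [Fin.val_last]
    field_simp
  · simp only [Fin.val_succ, Fin.val_castSucc, Nat.cast_add, Nat.cast_one]
    rw [div_lt_iff₀ hδ] at hm
    rw [add_mul, one_mul, add_sub_cancel_left, div_lt_iff₀ hm0]
    linarith

theorem HasLeftRiemannIntegral.unique {f g : ℝ → ℝ} {T I₁ I₂ : ℝ} (hT : 0 ≤ T)
    (h₁ : HasLeftRiemannIntegral f g T I₁) (h₂ : HasLeftRiemannIntegral f g T I₂) :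
    I₁ = I₂ := by
  refine eq_of_forall_dist_le fun ε hε => ?_
  obtain ⟨δ₁, hδ₁, H₁⟩ := h₁ (ε / 2) (half_pos hε)
  obtain ⟨δ₂, hδ₂, H₂⟩ := h₂ (ε / 2) (half_pos hε)
  obtain ⟨n, t, hmono, ht0, htT, hmesh⟩ := exists_partition_mesh_lt hT (lt_min hδ₁ hδ₂)
  have e₁ := H₁ n t hmono ht0 htT fun i => (hmesh i).trans_le (min_le_left _ _)
  have e₂ := H₂ n t hmono ht0 htT fun i => (hmesh i).trans_le (min_le_right _ _)
  rw [Real.dist_eq]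
  linarith [abs_sub_le I₁ (leftRiemannSum f g t) I₂, abs_sub_comm I₁ (leftRiemannSum f g t)]

end RiemannSums

namespace StieltjesFunction

variable {F G : StieltjesFunction ℝ} {f : ℝ → ℝ} {a b : ℝ}

theorem ofReal_sub_eq_setLIntegral
    (hd : G.measure = F.measure.withDensity fun t => ENNReal.ofReal (f t)) :
    ENNReal.ofReal (G b - G a) = ∫⁻ x in Set.Ioc a b, ENNReal.ofReal (f x) ∂F.measure := by
  rw [← G.measure_Ioc, hd, withDensity_apply _ measurableSet_Ioc]

theorem sub_le_mul_sub_of_withDensity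
    (hd : G.measure = F.measure.withDensity fun t => ENNReal.ofReal (f t)) (hab : a ≤ b)
    {M : ℝ} (hM : 0 ≤ M) (hf : ∀ x ∈ Set.Ioc a b, f x ≤ M) :
    G b - G a ≤ M * (F b - F a) := by
  refine (ENNReal.ofReal_le_ofReal_iff (mul_nonneg hM (sub_nonneg.2 (F.mono hab)))).1 ?_
  rw [ofReal_sub_eq_setLIntegral hd, ENNReal.ofReal_mul hM, ← F.measure_Ioc,
    ← setLIntegral_const]
  exact setLIntegral_mono' measurableSet_Ioc fun x hx => ENNReal.ofReal_le_ofReal (hf x hx)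

theorem mul_sub_le_sub_of_withDensity
    (hd : G.measure = F.measure.withDensity fun t => ENNReal.ofReal (f t)) (hab : a ≤ b)
    {m : ℝ} (hf : ∀ x ∈ Set.Ioc a b, m ≤ f x) :
    m * (F b - F a) ≤ G b - G a := by
  have hF : 0 ≤ F b - F a := sub_nonneg.2 (F.mono hab)
  have hG : 0 ≤ G b - G a := sub_nonneg.2 (G.mono hab)
  rcases le_or_gt m 0 with hm | hm
  · nlinarith
  refine (ENNReal.ofReal_le_ofReal_iff hG).1 ?_
  rw [ofReal_sub_eq_setLIntegral hd, ENNReal.ofReal_mul hm.le, ← F.measure_Ioc,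
    ← setLIntegral_const]
  exact setLIntegral_mono' measurableSet_Ioc fun x hx => ENNReal.ofReal_le_ofReal (hf x hx)

end StieltjesFunction

/-- `dK = S dX` with `|dX| ≤ dW`, tested on intervals where `S` is nearly constant. -/
def IsStieltjesPrimitive (S X K W : ℝ → ℝ) : Prop :=
  ∀ a b c ε : ℝ, a ≤ b → (∀ x ∈ Set.Ioc a b, |S x - c| ≤ ε) →
    |c * (X b - X a) - (K b - K a)| ≤ ε * (W b - W a)

namespace IsStieltjesPrimitive

variable {S X X' K K' W W' : ℝ → ℝ}

theorem const (x₀ : ℝ) : IsStieltjesPrimitive S (fun _ => x₀) 0 0 :=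
  fun a b c ε _ _ => by simp

theorem add (h : IsStieltjesPrimitive S X K W) (h' : IsStieltjesPrimitive S X' K' W') :
    IsStieltjesPrimitive S (X + X') (K + K') (W + W') := by
  intro a b c ε hab hS
  calc |c * ((X + X') b - (X + X') a) - ((K + K') b - (K + K') a)|
      = |(c * (X b - X a) - (K b - K a)) + (c * (X' b - X' a) - (K' b - K' a))| := by
        simp only [Pi.add_apply]; ring_nf
    _ ≤ |c * (X b - X a) - (K b - K a)| + |c * (X' b - X' a) - (K' b - K' a)| :=
        abs_add_le _ _
    _ ≤ ε * (W b - W a) + ε * (W' b - W' a) := add_le_add (h a b c ε hab hS) (h' a b c ε hab hS)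
    _ = ε * ((W + W') b - (W + W') a) := by simp only [Pi.add_apply]; ring

theorem neg (h : IsStieltjesPrimitive S X K W) : IsStieltjesPrimitive S (-X) (-K) W := by
  intro a b c ε hab hS
  rw [← abs_neg]
  convert h a b c ε hab hS using 2
  simp only [Pi.neg_apply]
  ring

theorem sub (h : IsStieltjesPrimitive S X K W) (h' : IsStieltjesPrimitive S X' K' W') :
    IsStieltjesPrimitive S (X - X') (K - K') (W + W') := by
  simpa only [sub_eq_add_neg] using h.add h'.neg

theorem of_withDensity (hS : ∀ x, 0 ≤ S x) {F G : StieltjesFunction ℝ} {f : ℝ → ℝ}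
    (hd : G.measure = F.measure.withDensity fun t => ENNReal.ofReal (f t))
    (hsupp : F.measure {t | f t ≠ S t} = 0) : IsStieltjesPrimitive S F G F := by
  have hdS : G.measure = F.measure.withDensity fun t => ENNReal.ofReal (S t) :=
    hd.trans (withDensity_congr_ae ((ae_iff.2 hsupp).mono fun t ht => congrArg ENNReal.ofReal ht))
  intro a b c ε hab hSc
  rcases hab.eq_or_lt with rfl | hlt
  · simp
  have hclose := fun x hx => abs_le.1 (hSc x hx)
  have hcε : 0 ≤ c + ε := by linarith [hS b, (hclose b ⟨hlt, le_rfl⟩).2]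
  have hup := StieltjesFunction.sub_le_mul_sub_of_withDensity hdS hab hcε
    fun x hx => by linarith [(hclose x hx).2]
  have hlow := StieltjesFunction.mul_sub_le_sub_of_withDensity hdS hab (m := c - ε)
    fun x hx => by linarith [(hclose x hx).1]
  rw [abs_le]
  constructor <;> linarith

theorem jumpSum (J : Finset ℝ) (Δ : ℝ → ℝ) :
    IsStieltjesPrimitive S (jumpSum J Δ) (jumpSum J fun s => S s * Δ s)
      (jumpSum J fun s => |Δ s|) := by
  intro a b c ε hab hS
  rw [jumpSum_sub_jumpSum J hab, jumpSum_sub_jumpSum J hab, jumpSum_sub_jumpSum J hab, mul_sum,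
    mul_sum, ← sum_sub_distrib]
  refine (abs_sum_le_sum_abs _ _).trans (sum_le_sum fun s hs => ?_)
  rw [← sub_mul, abs_mul, abs_sub_comm]
  exact mul_le_mul_of_nonneg_right (hS s (mem_filter.1 hs).2) (abs_nonneg _)

theorem abs_rightRiemannSum_sub_le (h : IsStieltjesPrimitive S X K W) {n : ℕ}
    {t : Fin (n + 1) → ℝ} (ht : Monotone t) {ε : ℝ}
    (hS : ∀ i : Fin n, ∀ x ∈ Set.Ioc (t i.castSucc) (t i.succ), |S x - S (t i.succ)| ≤ ε) :
    |rightRiemannSum S X t - (K (t (Fin.last n)) - K (t 0))| ≤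
      ε * (W (t (Fin.last n)) - W (t 0)) := by
  rw [← Fin.sum_succ_sub_castSucc fun j => K (t j), ← Fin.sum_succ_sub_castSucc fun j => W (t j),
    rightRiemannSum, ← sum_sub_distrib, mul_sum]
  exact (abs_sum_le_sum_abs _ _).trans
    (sum_le_sum fun i _ => h _ _ _ _ (ht (Fin.castSucc_le_succ i)) (hS i))

theorem hasLeftRiemannIntegral {T : ℝ} (hS : ContinuousOn S (Set.Icc 0 T))
    (h : IsStieltjesPrimitive S X K W) :
    HasLeftRiemannIntegral X S T (X T * S T - X 0 * S 0 - (K T - K 0)) := by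
  intro ε hε
  set ε' := ε / (|W T - W 0| + 1)
  have hε' : 0 < ε' := by positivity
  obtain ⟨δ, hδ, hSδ⟩ := Metric.uniformContinuousOn_iff.1
    (isCompact_Icc.uniformContinuousOn_of_continuous hS) ε' hε'
  refine ⟨δ, hδ, fun n t ht ht0 htT hmesh => ?_⟩
  have hmem : ∀ j, t j ∈ Set.Icc 0 T :=
    fun j => ⟨ht0 ▸ ht (Fin.zero_le j), htT ▸ ht (Fin.le_last j)⟩
  have hclose : ∀ i : Fin n, ∀ x ∈ Set.Ioc (t i.castSucc) (t i.succ),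
      |S x - S (t i.succ)| ≤ ε' := by
    intro i x hx
    have hx' : x ∈ Set.Icc 0 T := ⟨(hmem _).1.trans hx.1.le, hx.2.trans (hmem _).2⟩
    have hdist : dist x (t i.succ) < δ := by
      rw [Real.dist_eq, abs_sub_comm, abs_of_nonneg (sub_nonneg.2 hx.2)]
      linarith [hx.1, hmesh i]
    exact (hSδ x hx' _ (hmem _) hdist).le
  have hsum := h.abs_rightRiemannSum_sub_le ht hclose
  have hparts := leftRiemannSum_add_rightRiemannSum X S t
  rw [ht0, htT] at hsum hparts
  calc |leftRiemannSum X S t - (X T * S T - X 0 * S 0 - (K T - K 0))|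
      = |rightRiemannSum S X t - (K T - K 0)| := by
        rw [← abs_neg]; congr 1; linarith
    _ ≤ ε' * (W T - W 0) := hsum
    _ ≤ ε' * |W T - W 0| := mul_le_mul_of_nonneg_left (le_abs_self _) hε'.le
    _ < ε := by
        rw [div_mul_eq_mul_div, div_lt_iff₀ (by positivity)]
        linarith

end IsStieltjesPrimitive

theorem Real.weighted_sub_nonneg_of_geom_mean_le {α x y x' y' : ℝ}
    (hα : α ∈ Set.Ioo 0 1) (hx : 0 < x) (hy : 0 < y) (hx' : 0 < x') (hy' : 0 < y')
    (h : x ^ α * y ^ (1 - α) ≤ x' ^ α * y' ^ (1 - α)) :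
    0 ≤ α * (x' - x) * y + (1 - α) * (y' - y) * x := by
  have hamgm := Real.geom_mean_le_arith_mean2_weighted hα.1.le (sub_nonneg.2 hα.2.le)
    (div_pos hx' hx).le (div_pos hy' hy).le (add_sub_cancel α 1)
  have hone : 1 ≤ (x' / x) ^ α * (y' / y) ^ (1 - α) := by
    rw [Real.div_rpow hx'.le hx.le, Real.div_rpow hy'.le hy.le, div_mul_div_comm,
      one_le_div (by positivity)]
    exact h
  have hmean : α * (x' / x) + (1 - α) * (y' / y) =
      (α * x' * y + (1 - α) * y' * x) / (x * y) := by
    field_simp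
  have hlin := hone.trans (hamgm.trans_eq hmean)
  rw [one_le_div (by positivity)] at hlin
  linarith

theorem heaviside_of_nonpos {z : ℝ} (hz : z ≤ 0) : heaviside z = 0 := if_neg hz.not_gt

theorem one_sub_mul_heaviside_mul_of_nonneg (τ : ℝ) {z : ℝ} (hz : 0 ≤ z) :
    (1 - τ * heaviside z) * z = (1 - τ) * z := by
  rcases hz.eq_or_lt with rfl | hz
  · simp
  · rw [heaviside, if_pos hz, mul_one]

theorem value_change_nonneg_of_trade {α τ β x y a b S : ℝ} (hα : α ∈ Set.Ioo 0 1) (hτ : τ < 1)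
    (hβ : β = α / (1 - α)) (hx : 0 < x) (hy : 0 < y) (hxa : 0 < x + a) (hyb : 0 < y + b)
    (hab : a * b ≤ 0) (hB : (1 - τ) * β * y / x ≤ S) (hA : S ≤ β * y / ((1 - τ) * x))
    (htrade : x ^ α * y ^ (1 - α) ≤
      (x + (1 - τ * heaviside a) * a) ^ α * (y + (1 - τ * heaviside b) * b) ^ (1 - α)) :
    0 ≤ b + S * a := by
  have hα' : 0 < 1 - α := sub_pos.2 hα.2
  have hτ' : 0 < 1 - τ := sub_pos.2 hτ
  have hαβ : (1 - α) * β = α := by rw [hβ, mul_div_cancel₀ _ hα'.ne']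
  rcases mul_nonpos_iff.1 hab with ⟨ha, hb⟩ | ⟨ha, hb⟩
  · rw [one_sub_mul_heaviside_mul_of_nonneg τ ha, heaviside_of_nonpos hb, mul_zero, sub_zero,
      one_mul] at htrade
    have hlin := Real.weighted_sub_nonneg_of_geom_mean_le hα hx hy
      (by positivity) hyb htrade
    rw [div_le_iff₀ hx] at hB
    have hgain : 0 ≤ (1 - α) * (x * (b + S * a)) := by
      linarith [mul_le_mul_of_nonneg_left (mul_le_mul_of_nonneg_right hB ha) hα'.le,
        congrArg (· * ((1 - τ) * a * y)) hαβ]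
    exact (mul_nonneg_iff_of_pos_left hx).1 ((mul_nonneg_iff_of_pos_left hα').1 hgain)
  · rw [one_sub_mul_heaviside_mul_of_nonneg τ hb, heaviside_of_nonpos ha, mul_zero, sub_zero,
      one_mul] at htrade
    have hlin := Real.weighted_sub_nonneg_of_geom_mean_le hα hx hy
      hxa (by positivity) htrade
    rw [le_div_iff₀ (by positivity)] at hA
    have hgain : 0 ≤ (1 - α) * ((1 - τ) * x * (b + S * a)) := by
      linarith [mul_le_mul_of_nonneg_left (mul_le_mul_of_nonpos_right hA ha) hα'.le,
        congrArg (· * (a * y)) hαβ]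
    exact (mul_nonneg_iff_of_pos_left (by positivity)).1
      ((mul_nonneg_iff_of_pos_left hα').1 hgain)

theorem stmt_16_general
    (α τ β x₀ y₀ T : ℝ)
    (hα : α ∈ Set.Ioo (0 : ℝ) 1) (hτ : τ ∈ Set.Ioo (0 : ℝ) 1)
    (hβ : β = α / (1 - α)) (hT : 0 ≤ T)
    (Sstar : ℝ → ℝ) (hScont : Continuous Sstar) (hSpos : ∀ t, 0 < Sstar t)
    (Xup Xdown Yup Ydown : StieltjesFunction ℝ)
    (J : Finset ℝ)
    (Δx Δy : ℝ → ℝ)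
    (X Y Xleft Yleft B A : ℝ → ℝ)
    (hX : ∀ t, X t = x₀ + Xup t - Xdown t + ∑ s ∈ J.filter (· ≤ t), Δx s)
    (hY : ∀ t, Y t = y₀ + Yup t - Ydown t + ∑ s ∈ J.filter (· ≤ t), Δy s)
    (hXleft : ∀ t, Xleft t = x₀ + Xup t - Xdown t + ∑ s ∈ J.filter (· < t), Δx s)
    (hYleft : ∀ t, Yleft t = y₀ + Yup t - Ydown t + ∑ s ∈ J.filter (· < t), Δy s)
    (hXpos : ∀ t, 0 < X t) (hYpos : ∀ t, 0 < Y t)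
    (hXleftpos : ∀ t, 0 < Xleft t) (hYleftpos : ∀ t, 0 < Yleft t)
    (hYd : Ydown.measure = Xup.measure.withDensity fun t => ENNReal.ofReal (B t))
    (hYu : Yup.measure = Xdown.measure.withDensity fun t => ENNReal.ofReal (A t))
    (hXupsupp : Xup.measure {t | B t ≠ Sstar t} = 0)
    (hXdownsupp : Xdown.measure {t | A t ≠ Sstar t} = 0)
    (hNAjump : ∀ s ∈ J,
      (1 - τ) * β * Yleft s / Xleft s ≤ Sstar s ∧
      Sstar s ≤ β * Yleft s / ((1 - τ) * Xleft s))
    (hjump : ∀ s ∈ J, Δx s * Δy s ≤ 0 ∧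
      (Xleft s) ^ α * (Yleft s) ^ (1 - α) ≤
        (Xleft s + (1 - τ * heaviside (Δx s)) * Δx s) ^ α *
          (Yleft s + (1 - τ * heaviside (Δy s)) * Δy s) ^ (1 - α))
    (I : ℝ)
    (hI : ∀ ε > 0, ∃ δ > 0, ∀ n : ℕ, ∀ t : Fin (n + 1) → ℝ,
      Monotone t → t 0 = 0 → t (Fin.last n) = T →
      (∀ i : Fin n, t i.succ - t i.castSucc < δ) →
      |(∑ i : Fin n, X (t i.castSucc) * (Sstar (t i.succ) - Sstar (t i.castSucc))) - I| < ε) :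
    Y 0 + X 0 * Sstar 0 + I ≤ Y T + X T * Sstar T ∧
      (J = ∅ → Y T + X T * Sstar T = Y 0 + X 0 * Sstar 0 + I) := by
  have hXeq : X = (fun _ => x₀) + ⇑Xup - ⇑Xdown + jumpSum J Δx := funext hX
  have hSnn : ∀ t, 0 ≤ Sstar t := fun t => (hSpos t).le
  have hprim : IsStieltjesPrimitive Sstar X
      (0 + ⇑Ydown - ⇑Yup + jumpSum J fun s => Sstar s * Δx s)
      (0 + ⇑Xup + ⇑Xdown + jumpSum J fun s => |Δx s|) :=
    hXeq ▸ (((IsStieltjesPrimitive.const x₀).add (.of_withDensity hSnn hYd hXupsupp)).sub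
      (.of_withDensity hSnn hYu hXdownsupp)).add (.jumpSum J Δx)
  have hIeq := (hprim.hasLeftRiemannIntegral hScont.continuousOn).unique hT hI
  set gain : ℝ → ℝ := fun s => Δy s + Sstar s * Δx s
  have hvalue : Y T + X T * Sstar T - (Y 0 + X 0 * Sstar 0 + I) =
      jumpSum J gain T - jumpSum J gain 0 := by
    simp only [← hIeq, hY, jumpSum, gain, sum_add_distrib, Pi.add_apply, Pi.sub_apply,
      Pi.zero_apply]
    ring
  have hgain : ∀ s ∈ J, 0 ≤ gain s := by
    intro s hs
    have hXs : X s = Xleft s + Δx s := by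
      rw [hX, hXleft, sum_filter_le_eq_sum_filter_lt_add hs]; ring
    have hYs : Y s = Yleft s + Δy s := by
      rw [hY, hYleft, sum_filter_le_eq_sum_filter_lt_add hs]; ring
    exact value_change_nonneg_of_trade hα hτ.2 hβ (hXleftpos s) (hYleftpos s) (hXs ▸ hXpos s)
      (hYs ▸ hYpos s) (hjump s hs).1 (hNAjump s hs).1 (hNAjump s hs).2 (hjump s hs).2
  refine ⟨?_, fun hempty => ?_⟩
  · linarith [jumpSum_mono J hgain hT]
  · simp only [hempty, jumpSum, filter_empty, sum_empty, sub_zero] at hvalue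
    linarith

/-- **Super-hedge theorem.** Let `S*` be a positive continuous (pathwise) price, and let
`(X,Y)` be the G3M reserve processes with fee `τ ∈ (0,1)`: continuous nondecreasing parts
`X↑, X↓, Y↑, Y↓` (Stieltjes functions) with `dY↓ = B dX↑`, `dY↑ = A dX↓`, `X↑` (resp. `X↓`)
increasing only on `{B = S*}` (resp. `{A = S*}`), where `B = (1-τ)βY/X`,
`A = βY/((1-τ)X)`, plus finitely many jumps at times in `J` satisfying the no-arbitrage
bound `B₋ ≤ S* ≤ A₋` and the trading-function inequality. If `I` is the (pathwise) integral
`∫₀^T X dS*`, defined as the limit of left-endpoint Riemann sums, then the pool value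
`V = Y + X·S*` satisfies `V_T ≥ V_0 + I`, with equality when there are no jumps. -/
theorem stmt_16
    (α τ β x₀ y₀ T : ℝ)
    (hα : α ∈ Set.Ioo (0 : ℝ) 1) (hτ : τ ∈ Set.Ioo (0 : ℝ) 1)
    (hβ : β = α / (1 - α)) (hx₀ : 0 < x₀) (hy₀ : 0 < y₀) (hT : 0 ≤ T)
    (Sstar : ℝ → ℝ) (hScont : Continuous Sstar) (hSpos : ∀ t, 0 < Sstar t)
    (Xup Xdown Yup Ydown : StieltjesFunction ℝ)
    (hXupc : Continuous fun t => Xup t) (hXdownc : Continuous fun t => Xdown t)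
    (hYupc : Continuous fun t => Yup t) (hYdownc : Continuous fun t => Ydown t)
    (hXup0 : ∀ t ≤ (0 : ℝ), Xup t = 0) (hXdown0 : ∀ t ≤ (0 : ℝ), Xdown t = 0)
    (hYup0 : ∀ t ≤ (0 : ℝ), Yup t = 0) (hYdown0 : ∀ t ≤ (0 : ℝ), Ydown t = 0)
    (J : Finset ℝ) (hJ : ↑J ⊆ Set.Ioc 0 T)
    (Δx Δy : ℝ → ℝ)
    (X Y Xleft Yleft B A : ℝ → ℝ)
    (hX : ∀ t, X t = x₀ + Xup t - Xdown t + ∑ s ∈ J.filter (· ≤ t), Δx s)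
    (hY : ∀ t, Y t = y₀ + Yup t - Ydown t + ∑ s ∈ J.filter (· ≤ t), Δy s)
    (hXleft : ∀ t, Xleft t = x₀ + Xup t - Xdown t + ∑ s ∈ J.filter (· < t), Δx s)
    (hYleft : ∀ t, Yleft t = y₀ + Yup t - Ydown t + ∑ s ∈ J.filter (· < t), Δy s)
    (hXpos : ∀ t, 0 < X t) (hYpos : ∀ t, 0 < Y t)
    (hXleftpos : ∀ t, 0 < Xleft t) (hYleftpos : ∀ t, 0 < Yleft t)
    (hB : ∀ t, B t = (1 - τ) * β * Y t / X t)
    (hA : ∀ t, A t = β * Y t / ((1 - τ) * X t))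
    (hYd : Ydown.measure = Xup.measure.withDensity fun t => ENNReal.ofReal (B t))
    (hYu : Yup.measure = Xdown.measure.withDensity fun t => ENNReal.ofReal (A t))
    (hXupsupp : Xup.measure {t | B t ≠ Sstar t} = 0)
    (hXdownsupp : Xdown.measure {t | A t ≠ Sstar t} = 0)
    (hNAjump : ∀ s ∈ J,
      (1 - τ) * β * Yleft s / Xleft s ≤ Sstar s ∧
      Sstar s ≤ β * Yleft s / ((1 - τ) * Xleft s))
    (hjump : ∀ s ∈ J, Δx s * Δy s ≤ 0 ∧
      (Xleft s) ^ α * (Yleft s) ^ (1 - α) ≤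
        (Xleft s + (1 - τ * heaviside (Δx s)) * Δx s) ^ α *
          (Yleft s + (1 - τ * heaviside (Δy s)) * Δy s) ^ (1 - α))
    (I : ℝ)
    (hI : ∀ ε > 0, ∃ δ > 0, ∀ n : ℕ, ∀ t : Fin (n + 1) → ℝ,
      Monotone t → t 0 = 0 → t (Fin.last n) = T →
      (∀ i : Fin n, t i.succ - t i.castSucc < δ) →
      |(∑ i : Fin n, X (t i.castSucc) * (Sstar (t i.succ) - Sstar (t i.castSucc))) - I| < ε) :
    Y 0 + X 0 * Sstar 0 + I ≤ Y T + X T * Sstar T ∧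
      (J = ∅ → Y T + X T * Sstar T = Y 0 + X 0 * Sstar 0 + I) :=
  stmt_16_general α τ β x₀ y₀ T hα hτ hβ hT Sstar hScont hSpos Xup Xdown Yup Ydown J Δx Δy X Y Xleft
    Yleft B A hX hY hXleft hYleft hXpos hYpos hXleftpos hYleftpos hYd hYu hXupsupp hXdownsupp
    hNAjump hjump I hI
end

section
/- In the Skorokhod construction, if (φ, η↑, η↓) solves the reflection problem on [0,a] for the continuous path ψ_t = log S*_t - log S₀ - log(1-τ), and X solves dX_t = X_t[(1+(1-τ)β)^{-1} dη↑_t - (1+β/(1-τ))^{-1} dη↓_t], X₀ = x, with Y defined via dY = -βY[(1-τ)dX↑/X - (1/(1-τ))dX↓/X], Y₀ = y, then φ_t = log(S*_t/((1-τ)S_t)) for all t, where S = βY/X. In particular 0 ≤ φ ≤ a is equivalent to (1-τ)S ≤ S* ≤ S/(1-τ). -/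
/-!
Solving the two linear equations gives `S = S₀ · exp(η↓ - η↑)` with `S₀ = βy/x`: in the
exponent of `Y/X` the coefficients of `η↑` and `η↓` collapse to `-1` and `+1` since
`-p/(1+p) - 1/(1+p) = -1` and `q/(1+q) + 1/(1+q) = 1`. Taking logarithms,
`log(S*/((1-τ)S)) = log S* - log S₀ - log(1-τ) + η↑ - η↓ = ψ + η↑ - η↓ = φ`, and the
band `0 ≤ φ ≤ -2 log(1-τ)` exponentiates to `(1-τ)S ≤ S* ≤ S/(1-τ)`.
-/

open Real

lemma mul_exp_div_mul_exp_eq (β x y p q u d : ℝ) (hp : 1 + p ≠ 0) (hq : 1 + q ≠ 0)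
    (hx : x ≠ 0) :
    β * (y * exp (-(p * u / (1 + p)) + q * d / (1 + q))) /
        (x * exp (u / (1 + p) - d / (1 + q))) = β * y / x * exp (d - u) := by
  have hexp : -(p * u / (1 + p)) + q * d / (1 + q)
      = (d - u) + (u / (1 + p) - d / (1 + q)) := by
    field_simp
    ring
  rw [hexp, exp_add]
  field_simp

lemma log_div_mul_mul_exp (s c S₀ e : ℝ) (hs : s ≠ 0) (hc : c ≠ 0) (hS₀ : S₀ ≠ 0) :
    log (s / (c * (S₀ * exp e))) = log s - log S₀ - log c - e := by
  rw [log_div hs (by positivity), log_mul hc (by positivity),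
    log_mul hS₀ (exp_ne_zero e), log_exp]
  ring

lemma log_div_mul_mem_band_iff {s c S : ℝ} (hs : 0 < s) (hc : 0 < c) (hS : 0 < S) :
    (0 ≤ log (s / (c * S)) ∧ log (s / (c * S)) ≤ -2 * log c) ↔
      (c * S ≤ s ∧ s ≤ S / c) := by
  have hcS : 0 < c * S := mul_pos hc hS
  rw [← log_le_log_iff hcS hs, ← log_le_log_iff hs (div_pos hS hc),
    log_div hs.ne' hcS.ne', log_mul hc.ne' hS.ne', log_div hS.ne' hc.ne']
  constructor <;> rintro ⟨h₁, h₂⟩ <;> constructor <;> linarith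

theorem stmt_19_general (α τ β x y a : ℝ)
    (hα : α ∈ Set.Ioo (0 : ℝ) 1) (hτ : τ ∈ Set.Ioo (0 : ℝ) 1)
    (hβ : β = α / (1 - α)) (hx : 0 < x) (hy : 0 < y)
    (ha : a = -2 * Real.log (1 - τ))
    (Sstar ψ φ ηup ηdown X Y S : ℝ → ℝ)
    (hSpos : ∀ t, 0 < Sstar t)
    (hψ : ∀ t, ψ t = Real.log (Sstar t) - Real.log (β * y / x) - Real.log (1 - τ))
    (hφ : ∀ t, φ t = ψ t + ηup t - ηdown t)
    (hX : ∀ t, X t = x * Real.exp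
      (ηup t / (1 + (1 - τ) * β) - ηdown t / (1 + β / (1 - τ))))
    (hY : ∀ t, Y t = y * Real.exp
      (-((1 - τ) * β * ηup t / (1 + (1 - τ) * β)) + β / (1 - τ) * ηdown t / (1 + β / (1 - τ))))
    (hS : ∀ t, S t = β * Y t / X t) :
    (∀ t, φ t = Real.log (Sstar t / ((1 - τ) * S t))) ∧
    (∀ t, (0 ≤ φ t ∧ φ t ≤ a) ↔ ((1 - τ) * S t ≤ Sstar t ∧ Sstar t ≤ S t / (1 - τ))) := by
  have h1τ : 0 < 1 - τ := sub_pos.2 hτ.2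
  have hβpos : 0 < β := hβ ▸ div_pos hα.1 (sub_pos.2 hα.2)
  have hS₀ : 0 < β * y / x := by positivity
  have hS_exp : ∀ t, S t = β * y / x * exp (ηdown t - ηup t) := fun t => by
    rw [hS, hX, hY]
    exact mul_exp_div_mul_exp_eq _ _ _ _ _ _ _ (by positivity) (by positivity) hx.ne'
  have hφ_log : ∀ t, φ t = log (Sstar t / ((1 - τ) * S t)) := fun t => by
    rw [hS_exp, log_div_mul_mul_exp _ _ _ _ (hSpos t).ne' h1τ.ne' hS₀.ne', hφ, hψ]
    ring
  refine ⟨hφ_log, fun t => ?_⟩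
  rw [hφ_log, ha]
  exact log_div_mul_mem_band_iff (hSpos t) h1τ (by rw [hS_exp]; positivity)

/-- **Identification of the reflected process.** If `(φ, η↑, η↓)` solves the Skorokhod
reflection problem on `[0,a]`, `a = -2·log(1-τ)`, for the path
`ψ_t = log S*_t - log S₀ - log(1-τ)` with `S₀ = βy/x`, and `X`, `Y` are the explicit
exponential solutions of the linear equations
`dX = X[(1+(1-τ)β)⁻¹ dη↑ - (1+β/(1-τ))⁻¹ dη↓]`, `X₀ = x`, and
`dY = -βY[(1-τ) dX↑/X - (1/(1-τ)) dX↓/X]`, `Y₀ = y`,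
then `φ_t = log(S*_t/((1-τ)S_t))` for all `t`, where `S = βY/X`; in particular
`0 ≤ φ_t ≤ a` is equivalent to `(1-τ)S_t ≤ S*_t ≤ S_t/(1-τ)`. -/
theorem stmt_19 (α τ β x y a : ℝ)
    (hα : α ∈ Set.Ioo (0 : ℝ) 1) (hτ : τ ∈ Set.Ioo (0 : ℝ) 1)
    (hβ : β = α / (1 - α)) (hx : 0 < x) (hy : 0 < y)
    (ha : a = -2 * Real.log (1 - τ))
    (Sstar ψ φ ηup ηdown X Y S : ℝ → ℝ)
    (hScont : Continuous Sstar) (hSpos : ∀ t, 0 < Sstar t)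
    (hψ : ∀ t, ψ t = Real.log (Sstar t) - Real.log (β * y / x) - Real.log (1 - τ))
    (hψ0 : 0 ≤ ψ 0 ∧ ψ 0 ≤ a)
    (hηupmono : Monotone ηup) (hηdownmono : Monotone ηdown)
    (hηupcont : Continuous ηup) (hηdowncont : Continuous ηdown)
    (hηup0 : ηup 0 = 0) (hηdown0 : ηdown 0 = 0)
    (hφ : ∀ t, φ t = ψ t + ηup t - ηdown t)
    (hrange : ∀ t, 0 ≤ t → 0 ≤ φ t ∧ φ t ≤ a)
    (hηupflat : ∀ s t, 0 ≤ s → s ≤ t → (∀ u ∈ Set.Icc s t, φ u ≠ 0) → ηup t = ηup s)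
    (hηdownflat : ∀ s t, 0 ≤ s → s ≤ t → (∀ u ∈ Set.Icc s t, φ u ≠ a) → ηdown t = ηdown s)
    (hX : ∀ t, X t = x * Real.exp
      (ηup t / (1 + (1 - τ) * β) - ηdown t / (1 + β / (1 - τ))))
    (hY : ∀ t, Y t = y * Real.exp
      (-((1 - τ) * β * ηup t / (1 + (1 - τ) * β)) + β / (1 - τ) * ηdown t / (1 + β / (1 - τ))))
    (hS : ∀ t, S t = β * Y t / X t) :
    (∀ t, φ t = Real.log (Sstar t / ((1 - τ) * S t))) ∧
    (∀ t, (0 ≤ φ t ∧ φ t ≤ a) ↔ ((1 - τ) * S t ≤ Sstar t ∧ Sstar t ≤ S t / (1 - τ))) :=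
  stmt_19_general α τ β x y a hα hτ hβ hx hy ha Sstar ψ φ ηup ηdown X Y S hSpos hψ hφ hX hY hS
end
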